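/- Let r, h > 0 and define γ : ℝ → ℝ³ by γ(s) = e^{φ(s)}·(r·cos φ(s), r·sin φ(s), h), where φ(s) = h·s/√(2r² + h²). Then γ has hyperbolic unit speed, and ⟨γ'(s), γ(s)⟩_{H,γ(s)}/‖γ(s)‖_{H,γ(s)} = √(r² + h²)/√(2r² + h²) for all s; that is, γ makes a constant hyperbolic angle θ with the hyperbolic-rotation Killing field V(p) = p, where cos θ = √(r² + h²)/√(2r² + h²). -/

import Mathlib

open Real
open scoped RealInnerProductSpace

/-- A point/vector of Euclidean 3-space. -/
noncomputable def v3 (x y z : ℝ) : EuclideanSpace ℝ (Fin 3) := !₂[x, y, z]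

/-- Hyperbolic (upper half-space) inner product of u and v at the point p. -/
noncomputable def hInner (p u v : EuclideanSpace ℝ (Fin 3)) : ℝ := ⟪u, v⟫ / (p 2) ^ 2

/-- Hyperbolic (upper half-space) norm of v at the point p. -/
noncomputable def hNorm (p v : EuclideanSpace ℝ (Fin 3)) : ℝ := ‖v‖ / p 2

/-- Covariant acceleration ∇_{γ'}γ' of a hyperbolic unit-speed curve in the
upper half-space model: A(s) = γ''(s) − (2γ₃'(s)/γ₃(s))·γ'(s) + (‖γ'(s)‖ₑ²/γ₃(s))·e₃. -/
noncomputable def hAccel (γ : ℝ → EuclideanSpace ℝ (Fin 3)) (s : ℝ) :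
    EuclideanSpace ℝ (Fin 3) :=
  deriv (deriv γ) s - (2 * deriv (fun t => γ t 2) s / γ s 2) • deriv γ s
    + (‖deriv γ s‖ ^ 2 / γ s 2) • v3 0 0 1

/-! The curve is `t ↦ eᵗ Rₜ (r, 0, h)`, with `Rₜ` the rotation about the vertical axis, run at the
constant rate `t = h s / √(2r² + h²)`. Its `t`-velocity is the position vector plus the rotational
field `(-y, x, 0)`, which is orthogonal to it and has length `eᵗ r`; so the velocity has length
`eᵗ √(2r² + h²)` and inner product `e²ᵗ (r² + h²)` with the position. The rate is chosen so that
the Euclidean speed equals the height `eᵗ h`, and the angle with `V(p) = p` is then constant. -/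

lemma v3_eq_sum (x y z : ℝ) : v3 x y z = x • v3 1 0 0 + y • v3 0 1 0 + z • v3 0 0 1 := by
  ext i; fin_cases i <;> simp [v3]

lemma v3_add_v3 (x y z x' y' z' : ℝ) :
    v3 x y z + v3 x' y' z' = v3 (x + x') (y + y') (z + z') := by
  ext i; fin_cases i <;> simp [v3]

lemma inner_v3 (x y z x' y' z' : ℝ) :
    ⟪v3 x y z, v3 x' y' z'⟫ = x * x' + y * y' + z * z' := by
  simp [v3, PiLp.inner_apply, Fin.sum_univ_three, mul_comm]

lemma norm_v3 (x y z : ℝ) : ‖v3 x y z‖ = √(x ^ 2 + y ^ 2 + z ^ 2) := by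
  simp [v3, EuclideanSpace.norm_eq, Fin.sum_univ_three]

lemma HasDerivAt.v3 {x y z : ℝ → ℝ} {x' y' z' t : ℝ} (hx : HasDerivAt x x' t)
    (hy : HasDerivAt y y' t) (hz : HasDerivAt z z' t) :
    HasDerivAt (fun t => v3 (x t) (y t) (z t)) (v3 x' y' z') t := by
  simp only [v3_eq_sum x', v3_eq_sum (x _)]
  exact ((hx.smul_const _).add (hy.smul_const _)).add (hz.smul_const _)

lemma hInner_self_div_hNorm_self (p u : EuclideanSpace ℝ (Fin 3)) :
    hInner p u p / hNorm p p = ⟪u, p⟫ / (p 2 * ‖p‖) := by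
  rcases eq_or_ne (p 2) 0 with hp | hp
  · simp [hInner, hNorm, hp]
  · rw [hInner, hNorm, div_div_div_eq, pow_two, mul_assoc, mul_comm ⟪u, p⟫,
      mul_div_mul_left _ _ hp]

noncomputable def loxodrome (r h t : ℝ) : EuclideanSpace ℝ (Fin 3) :=
  exp t • v3 (r * cos t) (r * sin t) h

noncomputable def loxodromeVelocity (r h t : ℝ) : EuclideanSpace ℝ (Fin 3) :=
  exp t • v3 (r * (cos t - sin t)) (r * (sin t + cos t)) h

lemma hasDerivAt_loxodrome (r h t : ℝ) :
    HasDerivAt (loxodrome r h) (loxodromeVelocity r h t) t := by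
  have hv : HasDerivAt (fun t => v3 (r * cos t) (r * sin t) h) (v3 (r * -sin t) (r * cos t) 0) t :=
    ((hasDerivAt_cos t).const_mul r).v3 ((hasDerivAt_sin t).const_mul r) (hasDerivAt_const t h)
  refine ((hasDerivAt_exp t).smul hv).congr_deriv ?_
  rw [loxodromeVelocity, ← smul_add, v3_add_v3]
  congr 2 <;> ring

lemma loxodrome_apply_two (r h t : ℝ) : loxodrome r h t 2 = exp t * h := by
  simp [loxodrome, v3]

lemma norm_loxodrome (r h t : ℝ) : ‖loxodrome r h t‖ = exp t * √(r ^ 2 + h ^ 2) := by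
  rw [loxodrome, norm_smul, norm_v3, norm_of_nonneg (exp_pos t).le]
  congr 2
  linear_combination r ^ 2 * cos_sq_add_sin_sq t

lemma norm_loxodromeVelocity (r h t : ℝ) :
    ‖loxodromeVelocity r h t‖ = exp t * √(2 * r ^ 2 + h ^ 2) := by
  rw [loxodromeVelocity, norm_smul, norm_v3, norm_of_nonneg (exp_pos t).le]
  congr 2
  linear_combination 2 * r ^ 2 * cos_sq_add_sin_sq t

lemma inner_loxodromeVelocity_loxodrome (r h t : ℝ) :
    ⟪loxodromeVelocity r h t, loxodrome r h t⟫ = exp t ^ 2 * (r ^ 2 + h ^ 2) := by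
  rw [loxodromeVelocity, loxodrome, real_inner_smul_left, real_inner_smul_right, inner_v3]
  linear_combination exp t ^ 2 * r ^ 2 * cos_sq_add_sin_sq t

lemma hasDerivAt_loxodrome_comp_mul (r h k s : ℝ) :
    HasDerivAt (fun s => loxodrome r h (k * s)) (k • loxodromeVelocity r h (k * s)) s :=
  ((hasDerivAt_loxodrome r h (k * s)).scomp s ((hasDerivAt_id s).const_mul k)).congr_deriv
    (by rw [mul_one])

theorem stmt_17_general (r h : ℝ) (hh : 0 < h)
    (φ : ℝ → ℝ) (hφ : φ = fun s => h * s / Real.sqrt (2 * r ^ 2 + h ^ 2))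
    (γ : ℝ → EuclideanSpace ℝ (Fin 3))
    (hγ : γ = fun s => Real.exp (φ s) •
        v3 (r * Real.cos (φ s)) (r * Real.sin (φ s)) h) :
    (∀ s, ‖deriv γ s‖ = γ s 2) ∧
    (∀ s, hInner (γ s) (deriv γ s) (γ s) / hNorm (γ s) (γ s)
        = Real.sqrt (r ^ 2 + h ^ 2) / Real.sqrt (2 * r ^ 2 + h ^ 2)) := by
  have hc : 0 < √(2 * r ^ 2 + h ^ 2) := by positivity
  have hγ_eq : γ = fun s => loxodrome r h (h / √(2 * r ^ 2 + h ^ 2) * s) := by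
    simp only [hγ, hφ, loxodrome, mul_div_right_comm]
  have hγ_apply (s : ℝ) : γ s = loxodrome r h (h / √(2 * r ^ 2 + h ^ 2) * s) := by
    rw [hγ_eq]
  have hderiv (s : ℝ) : deriv γ s = (h / √(2 * r ^ 2 + h ^ 2)) •
      loxodromeVelocity r h (h / √(2 * r ^ 2 + h ^ 2) * s) := by
    rw [hγ_eq]
    exact (hasDerivAt_loxodrome_comp_mul r h _ s).deriv
  refine ⟨fun s => ?_, fun s => ?_⟩
  · rw [hderiv, hγ_apply, norm_smul, norm_loxodromeVelocity, loxodrome_apply_two,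
      norm_of_nonneg (by positivity)]
    field_simp
  · rw [hInner_self_div_hNorm_self, hderiv, hγ_apply, real_inner_smul_left,
      inner_loxodromeVelocity_loxodrome, loxodrome_apply_two, norm_loxodrome]
    field_simp
    rw [sq_sqrt (by positivity)]

/-- The curve γ(s) = e^{φ(s)}·(r cos φ(s), r sin φ(s), h), with
φ(s) = hs/√(2r² + h²), has hyperbolic unit speed and makes the constant hyperbolic angle θ,
cos θ = √(r² + h²)/√(2r² + h²), with the hyperbolic-rotation Killing field V(p) = p. -/
theorem stmt_17 (r h : ℝ) (hr : 0 < r) (hh : 0 < h)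
    (φ : ℝ → ℝ) (hφ : φ = fun s => h * s / Real.sqrt (2 * r ^ 2 + h ^ 2))
    (γ : ℝ → EuclideanSpace ℝ (Fin 3))
    (hγ : γ = fun s => Real.exp (φ s) •
        v3 (r * Real.cos (φ s)) (r * Real.sin (φ s)) h) :
    (∀ s, ‖deriv γ s‖ = γ s 2) ∧
    (∀ s, hInner (γ s) (deriv γ s) (γ s) / hNorm (γ s) (γ s)
        = Real.sqrt (r ^ 2 + h ^ 2) / Real.sqrt (2 * r ^ 2 + h ^ 2)) :=
  stmt_17_general r h hh φ hφ γ hγ
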